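/- arXiv:2605.18065 — 3 statements merged into one kernel-verified Lean document; each statement's English description precedes it below -/
import Mathlib

section
/- For every real number z with 0 ≤ z ≤ 1/4, the series ∑_{n=0}^{∞} Cat(n)·z^{n+1} converges, and its sum equals (1 − √(1 − 4z))/2, where Cat(n) denotes the n-th Catalan number. -/
/-!
With `f n = Cat(n) z^(n+1)` the Catalan recurrence reads `f (n+1) = ∑ f k f (n-k)`, `f 0 = z`.
For `f ≥ 0` this gives `S (N+1) ≤ z + S N ^ 2` for the partial sums, so they stay below the
smaller root `L = (1 - √(1 - 4z))/2` of `x = z + x²`, and the series converges to some `c ≤ L`.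
The Cauchy product turns the recurrence into `c = z + c²`, and the only root not exceeding `L`
is `L` itself.
-/

open Finset

theorem catalan_mul_pow_succ_succ {R : Type*} [CommSemiring R] (z : R) (n : ℕ) :
    (catalan (n + 1) : R) * z ^ (n + 1 + 1) =
      ∑ k ∈ range (n + 1), (catalan k * z ^ (k + 1)) * (catalan (n - k) * z ^ (n - k + 1)) := by
  rw [catalan_succ, Fin.sum_univ_eq_sum_range (fun k => catalan k * catalan (n - k)),
    Nat.cast_sum, sum_mul]
  refine sum_congr rfl fun k hk => ?_
  obtain ⟨j, rfl⟩ := Nat.exists_eq_add_of_le (Nat.lt_succ_iff.mp (mem_range.mp hk))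
  rw [Nat.add_sub_cancel_left]
  push_cast
  ring

section QuadraticRecurrence

variable {f : ℕ → ℝ}

theorem sum_range_succ_le_add_sq (hf : 0 ≤ f)
    (hrec : ∀ n, f (n + 1) = ∑ k ∈ range (n + 1), f k * f (n - k)) (N : ℕ) :
    ∑ i ∈ range (N + 1), f i ≤ f 0 + (∑ i ∈ range N, f i) ^ 2 := by
  have hflip : ∑ m ∈ range N, ∑ k ∈ range (m + 1), f k * f (m - k) =
      ∑ m ∈ range N, f m * ∑ k ∈ range (N - m), f k := by
    simp only [sum_range_diag_flip N fun m k => f m * f k, mul_sum]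
  rw [sum_range_succ', add_comm, sq, sum_mul]
  simp only [hrec, hflip]
  gcongr with m
  · exact hf m
  · exact fun i _ _ => hf i
  · exact Nat.sub_le N m

theorem sum_range_le_of_add_sq_le (hf : 0 ≤ f)
    (hrec : ∀ n, f (n + 1) = ∑ k ∈ range (n + 1), f k * f (n - k))
    {L : ℝ} (hL : f 0 + L ^ 2 ≤ L) (N : ℕ) : ∑ i ∈ range N, f i ≤ L := by
  induction N with
  | zero => simpa using (add_nonneg (hf 0) (sq_nonneg L)).trans hL
  | succ N ih =>
    have hS : 0 ≤ ∑ i ∈ range N, f i := sum_nonneg fun i _ => hf i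
    calc ∑ i ∈ range (N + 1), f i ≤ f 0 + (∑ i ∈ range N, f i) ^ 2 :=
          sum_range_succ_le_add_sq hf hrec N
      _ ≤ f 0 + L ^ 2 := by gcongr
      _ ≤ L := hL

end QuadraticRecurrence

theorem tsum_eq_add_sq_of_summable_norm {R : Type*} [NormedRing R] [CompleteSpace R]
    {f : ℕ → R} (hf : Summable fun n => ‖f n‖)
    (hrec : ∀ n, f (n + 1) = ∑ k ∈ range (n + 1), f k * f (n - k)) :
    ∑' n, f n = f 0 + (∑' n, f n) ^ 2 := by
  rw [sq, tsum_mul_tsum_eq_tsum_sum_range_of_summable_norm hf hf, ← funext hrec,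
    (hf.of_norm).tsum_eq_zero_add]

theorem one_sub_sqrt_div_two_eq_add_sq {z : ℝ} (hz : z ≤ 1 / 4) :
    (1 - √(1 - 4 * z)) / 2 = z + ((1 - √(1 - 4 * z)) / 2) ^ 2 := by
  have hs := Real.sq_sqrt (show 0 ≤ 1 - 4 * z by linarith)
  linear_combination (-1 / 4 : ℝ) * hs

theorem eq_one_sub_sqrt_div_two_of_eq_add_sq {z c : ℝ} (hz : z ≤ 1 / 4)
    (hc : c = z + c ^ 2) (hle : c ≤ (1 - √(1 - 4 * z)) / 2) :
    c = (1 - √(1 - 4 * z)) / 2 := by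
  have hs := Real.sq_sqrt (show 0 ≤ 1 - 4 * z by linarith)
  have hs0 := Real.sqrt_nonneg (1 - 4 * z)
  -- `c` is a root of `X² - X + z`, whose other root `(1 + √(1 - 4z)) / 2` is the larger one
  have hroots : (c - (1 - √(1 - 4 * z)) / 2) * (c - (1 + √(1 - 4 * z)) / 2) = 0 := by
    linear_combination hc.symm + (-1 / 4 : ℝ) * hs
  rcases mul_eq_zero.mp hroots with h | h <;> linarith

/-- For `0 ≤ z ≤ 1/4`, the generating series of the Catalan numbers
`∑_{n=0}^∞ catalan n * z^(n+1)` converges with sum `(1 - √(1 - 4z))/2`. -/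
theorem stmt_1 (z : ℝ) (h0 : 0 ≤ z) (h1 : z ≤ 1 / 4) :
    HasSum (fun n : ℕ => (catalan n : ℝ) * z ^ (n + 1))
      ((1 - Real.sqrt (1 - 4 * z)) / 2) := by
  set f : ℕ → ℝ := fun n => (catalan n : ℝ) * z ^ (n + 1)
  have hf : 0 ≤ f := fun n => by positivity
  have hf0 : f 0 = z := by simp [f]
  have hrec : ∀ n, f (n + 1) = ∑ k ∈ range (n + 1), f k * f (n - k) :=
    catalan_mul_pow_succ_succ z
  have hL : f 0 + ((1 - √(1 - 4 * z)) / 2) ^ 2 ≤ (1 - √(1 - 4 * z)) / 2 :=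
    hf0 ▸ (one_sub_sqrt_div_two_eq_add_sq h1).ge
  have hbound := sum_range_le_of_add_sq_le hf hrec hL
  have hsum : Summable f := summable_of_sum_range_le hf hbound
  have hfix : ∑' n, f n = z + (∑' n, f n) ^ 2 := by
    rw [← hf0]
    exact tsum_eq_add_sq_of_summable_norm (by simpa [Real.norm_eq_abs] using hsum.abs) hrec
  rw [← eq_one_sub_sqrt_div_two_of_eq_add_sq h1 hfix (hsum.tsum_le_of_sum_range_le hbound)]
  exact hsum.hasSum
end

section
/- Let C > 0 be a real number and let (a_k)_{k≥1} be a sequence of nonnegative real numbers such that a_k ≤ C·∑_{i=1}^{k-1} a_i·a_{k-i} for every k ≥ 2. If a₁ ≤ 2/(9C), then the series ∑_{k=2}^{∞} a_k converges and ∑_{k=2}^{∞} a_k ≤ (1/2)·a₁. -/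
/-!
The partial sums `S n = ∑_{2 ≤ k < n} a k` stay below `a 1 / 2` by induction: every product
`a i * a j` in the convolution sums up to index `n` has `i, j < n`, so the recursion gives
`S (n + 1) ≤ C (a 1 + S n)² ≤ C (3/2 · a 1)² ≤ a 1 / 2`.
-/

open Finset

theorem sum_Ico_convolution_le_sq {R : Type*} [CommSemiring R] [PartialOrder R] [IsOrderedRing R]
    (a : ℕ → R) (ha : ∀ k, 1 ≤ k → 0 ≤ a k) (n : ℕ) :
    ∑ k ∈ Ico 2 (n + 1), ∑ i ∈ Ico 1 k, a i * a (k - i) ≤ (∑ i ∈ Ico 1 n, a i) ^ 2 := by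
  rw [sum_comm' (t' := Ico 1 n) (s' := fun i => Ico (1 + i) (n + 1 - i + i))
    (fun k i => by simp only [mem_Ico]; omega), sq, sum_mul]
  refine sum_le_sum fun i hi => ?_
  rw [← mul_sum, sum_Ico_add_right_sub_eq]
  exact mul_le_mul_of_nonneg_left (sum_le_sum_of_subset_of_nonneg
    (Ico_subset_Ico_right (show n + 1 - i ≤ n by simp only [mem_Ico] at hi; omega))
    fun j hj _ => ha j (mem_Ico.1 hj).1) (ha i (mem_Ico.1 hi).1)

theorem sum_Ico_one_le_of_sum_Ico_two_le {M : Type*} [AddCommMonoid M] [PartialOrder M]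
    [IsOrderedAddMonoid M] {a : ℕ → M} {n : ℕ} (ha1 : 0 ≤ a 1) {S : M}
    (hS : ∑ k ∈ Ico 2 n, a k ≤ S) : ∑ k ∈ Ico 1 n, a k ≤ a 1 + S := by
  rcases le_or_gt n 1 with hn | hn
  · rw [Ico_eq_empty_of_le (by omega), sum_empty] at hS
    rw [Ico_eq_empty_of_le hn, sum_empty]
    exact add_nonneg ha1 hS
  · rw [sum_eq_sum_Ico_succ_bot hn]
    exact add_le_add_right hS _

theorem sum_Ico_two_le_half_of_le_mul_convolution {K : Type*} [Field K] [LinearOrder K]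
    [IsStrictOrderedRing K] {C : K} {a : ℕ → K} (hC : 0 < C)
    (ha0 : ∀ k, 1 ≤ k → 0 ≤ a k)
    (harec : ∀ k, 2 ≤ k → a k ≤ C * ∑ i ∈ Ico 1 k, a i * a (k - i))
    (ha1 : a 1 ≤ 2 / (9 * C)) (n : ℕ) :
    ∑ k ∈ Ico 2 n, a k ≤ a 1 / 2 := by
  have ha1_nonneg : 0 ≤ a 1 := ha0 1 le_rfl
  have hCa1 : 9 * C * a 1 ≤ 2 := by rwa [le_div_iff₀' (by positivity)] at ha1
  induction n with
  | zero =>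
    rw [Ico_eq_empty_of_le (by norm_num), sum_empty]
    positivity
  | succ n ih =>
    have hhead : ∑ i ∈ Ico 1 n, a i ≤ 3 / 2 * a 1 := by
      linarith [sum_Ico_one_le_of_sum_Ico_two_le ha1_nonneg ih]
    calc ∑ k ∈ Ico 2 (n + 1), a k
        ≤ C * ∑ k ∈ Ico 2 (n + 1), ∑ i ∈ Ico 1 k, a i * a (k - i) := by
          rw [mul_sum]
          exact sum_le_sum fun k hk => harec k (mem_Ico.1 hk).1
      _ ≤ C * (∑ i ∈ Ico 1 n, a i) ^ 2 := by
          gcongr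
          exact sum_Ico_convolution_le_sq a ha0 n
      _ ≤ C * (3 / 2 * a 1) ^ 2 := by
          gcongr
          exact sum_nonneg fun i hi => ha0 i (mem_Ico.1 hi).1
      _ ≤ a 1 / 2 := by nlinarith

/-- Quantitative tail estimate: if `(a k)` is nonnegative with
`a k ≤ C * ∑_{i=1}^{k-1} a i * a (k-i)` for `k ≥ 2` and `a 1 ≤ 2/(9C)`, then
`∑_{k=2}^∞ a k` converges and is at most `(1/2) * a 1`. -/
theorem stmt_4 (C : ℝ) (hC : 0 < C) (a : ℕ → ℝ) (ha0 : ∀ k, 1 ≤ k → 0 ≤ a k)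
    (harec : ∀ k, 2 ≤ k → a k ≤ C * ∑ i ∈ Finset.Ico 1 k, a i * a (k - i))
    (ha1 : a 1 ≤ 2 / (9 * C)) :
    Summable (fun k : ℕ => a (k + 2)) ∧
      ∑' k : ℕ, a (k + 2) ≤ (1 / 2) * a 1 := by
  have hnn : ∀ k, 0 ≤ a (k + 2) := fun k => ha0 (k + 2) (by omega)
  have hpartial : ∀ n, ∑ k ∈ range n, a (k + 2) ≤ 1 / 2 * a 1 := fun n => by
    rw [range_eq_Ico, sum_Ico_add']
    simpa [div_eq_inv_mul] using
      sum_Ico_two_le_half_of_le_mul_convolution hC ha0 harec ha1 (n + 2)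
  exact ⟨summable_of_sum_range_le hnn hpartial, Real.tsum_le_of_sum_range_le hnn hpartial⟩
end

section
/- Let E be a complex Banach space, C > 0 a real number, and (v_k)_{k≥1} a sequence in E such that ‖v_k‖ ≤ C·∑_{i=1}^{k-1} ‖v_i‖·‖v_{k-i}‖ for every k ≥ 2. If ‖v₁‖ ≤ 2/(9C), then the series ∑_{k=1}^{∞} v_k converges absolutely, and its sum v satisfies (1/2)·‖v₁‖ ≤ ‖v‖ ≤ (3/2)·‖v₁‖. -/
/-!
Put `a k = ‖v k‖`, `S N = ∑_{k<N} a (k+1)` and `T N = ∑_{k<N} a (k+2) = S (N+1) - a 1`. Summing the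
recursive bound and comparing the convolution sums with a square gives `T N ≤ C (S N)²`. If
`T ≤ a 1 / 2` at stage `N`, then `S (N+1) ≤ 3/2 · a 1`, and `C · a 1 ≤ 2/9` turns this into
`T (N+1) ≤ C · 9/4 · (a 1)² ≤ a 1 / 2`. So the tail `∑_{k≥2} v k` converges absolutely with norm at
most `‖v 1‖ / 2`, and both estimates follow from the triangle inequality.
-/

open Finset

section Convolution

variable {R : Type*} [CommSemiring R] [PartialOrder R] [IsOrderedRing R]

lemma sum_range_sum_Ico_mul_le_sq {a : ℕ → R} (ha : ∀ i, 0 ≤ a i) (N : ℕ) :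
    ∑ k ∈ range N, ∑ i ∈ Ico 1 (k + 2), a i * a (k + 2 - i) ≤
      (∑ j ∈ range N, a (j + 1)) ^ 2 := by
  have hswap : ∑ k ∈ range N, ∑ i ∈ Ico 1 (k + 2), a i * a (k + 2 - i) =
      ∑ i ∈ Ico 1 (N + 1), ∑ k ∈ Ico (i - 1) N, a i * a (k + 2 - i) :=
    sum_comm' fun k i => by simp only [mem_range, mem_Ico]; omega
  have hshift : ∑ i ∈ Ico 1 (N + 1), a i = ∑ j ∈ range N, a (j + 1) := by
    rw [sum_Ico_eq_sum_range, add_tsub_cancel_right]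
    simp only [add_comm 1]
  have hinner : ∀ i ∈ Ico 1 (N + 1),
      ∑ k ∈ Ico (i - 1) N, a (k + 2 - i) ≤ ∑ j ∈ range N, a (j + 1) := by
    intro i hi
    rw [mem_Ico] at hi
    calc ∑ k ∈ Ico (i - 1) N, a (k + 2 - i)
        = ∑ j ∈ range (N - (i - 1)), a (j + 1) := by
          rw [sum_Ico_eq_sum_range]
          exact sum_congr rfl fun j _ => congrArg a (by omega)
      _ ≤ ∑ j ∈ range N, a (j + 1) :=
          sum_le_sum_of_subset_of_nonneg (range_subset_range.2 (by omega)) fun j _ _ => ha _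
  calc ∑ k ∈ range N, ∑ i ∈ Ico 1 (k + 2), a i * a (k + 2 - i)
      = ∑ i ∈ Ico 1 (N + 1), a i * ∑ k ∈ Ico (i - 1) N, a (k + 2 - i) := by
        simp only [hswap, mul_sum]
    _ ≤ ∑ i ∈ Ico 1 (N + 1), a i * ∑ j ∈ range N, a (j + 1) :=
        sum_le_sum fun i hi => mul_le_mul_of_nonneg_left (hinner i hi) (ha i)
    _ = (∑ j ∈ range N, a (j + 1)) ^ 2 := by
        rw [← sum_mul, hshift, sq]

end Convolution

section QuadraticRecursion

variable {a : ℕ → ℝ} {C : ℝ}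

lemma sum_range_add_two_le_mul_sq (ha : ∀ i, 0 ≤ a i) (hC : 0 ≤ C)
    (hrec : ∀ k, 2 ≤ k → a k ≤ C * ∑ i ∈ Ico 1 k, a i * a (k - i)) (N : ℕ) :
    ∑ k ∈ range N, a (k + 2) ≤ C * (∑ k ∈ range N, a (k + 1)) ^ 2 :=
  calc ∑ k ∈ range N, a (k + 2)
      ≤ ∑ k ∈ range N, C * ∑ i ∈ Ico 1 (k + 2), a i * a (k + 2 - i) :=
        sum_le_sum fun k _ => hrec (k + 2) (by omega)
    _ ≤ C * (∑ k ∈ range N, a (k + 1)) ^ 2 := by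
        rw [← mul_sum]
        exact mul_le_mul_of_nonneg_left (sum_range_sum_Ico_mul_le_sq ha N) hC

lemma sum_range_add_two_le_half (ha : ∀ i, 0 ≤ a i) (hC : 0 ≤ C)
    (hrec : ∀ k, 2 ≤ k → a k ≤ C * ∑ i ∈ Ico 1 k, a i * a (k - i))
    (h1 : C * a 1 ≤ 2 / 9) (N : ℕ) :
    ∑ k ∈ range N, a (k + 2) ≤ a 1 / 2 := by
  induction N with
  | zero => rw [sum_range_zero]; exact div_nonneg (ha 1) zero_le_two
  | succ N ih =>
    have hS : ∑ k ∈ range (N + 1), a (k + 1) ≤ 3 / 2 * a 1 := by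
      rw [sum_range_succ']
      linarith
    have hS_sq : (∑ k ∈ range (N + 1), a (k + 1)) ^ 2 ≤ (3 / 2 * a 1) ^ 2 :=
      pow_le_pow_left₀ (sum_nonneg fun k _ => ha _) hS 2
    nlinarith [sum_range_add_two_le_mul_sq ha hC hrec (N + 1),
      mul_le_mul_of_nonneg_left hS_sq hC, mul_le_mul_of_nonneg_right h1 (ha 1)]

end QuadraticRecursion

theorem stmt_5_general {E : Type*} [NormedAddCommGroup E]
    [CompleteSpace E] (C : ℝ) (hC : 0 < C) (v : ℕ → E)
    (hrec : ∀ k, 2 ≤ k →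
      ‖v k‖ ≤ C * ∑ i ∈ Finset.Ico 1 k, ‖v i‖ * ‖v (k - i)‖)
    (h1 : ‖v 1‖ ≤ 2 / (9 * C)) :
    Summable (fun k : ℕ => ‖v (k + 1)‖) ∧
      ∃ s : E, HasSum (fun k : ℕ => v (k + 1)) s ∧
        (1 / 2) * ‖v 1‖ ≤ ‖s‖ ∧ ‖s‖ ≤ (3 / 2) * ‖v 1‖ := by
  have hC1 : C * ‖v 1‖ ≤ 2 / 9 := by
    rw [le_div_iff₀ (by positivity)] at h1
    linarith
  have htail : ∀ N, ∑ k ∈ range N, ‖v (k + 2)‖ ≤ ‖v 1‖ / 2 :=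
    sum_range_add_two_le_half (fun _ => norm_nonneg _) hC.le hrec hC1
  have hsum : Summable fun k => ‖v (k + 2)‖ :=
    summable_of_sum_range_le (fun _ => norm_nonneg _) htail
  obtain ⟨t, ht⟩ := hsum.of_norm
  have ht_norm : ‖t‖ ≤ ‖v 1‖ / 2 := by
    rw [← ht.tsum_eq]
    exact (norm_tsum_le_tsum_norm hsum).trans (hsum.tsum_le_of_sum_range_le htail)
  have hlower := norm_sub_le (v 1 + t) t
  rw [add_sub_cancel_right] at hlower
  refine ⟨(summable_nat_add_iff 1).1 hsum, v 1 + t, ht.zero_add, ?_, ?_⟩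
  · linarith
  · linarith [norm_add_le (v 1) t]

/-- Banach-space comparison of a Kuranishi-type series with its linear term: if
`‖v k‖ ≤ C * ∑_{i=1}^{k-1} ‖v i‖ * ‖v (k-i)‖` for `k ≥ 2` and `‖v 1‖ ≤ 2/(9C)`,
then `∑_{k=1}^∞ v k` converges absolutely and its sum `s` satisfies
`(1/2)‖v 1‖ ≤ ‖s‖ ≤ (3/2)‖v 1‖`. -/
theorem stmt_5 {E : Type*} [NormedAddCommGroup E] [NormedSpace ℂ E]
    [CompleteSpace E] (C : ℝ) (hC : 0 < C) (v : ℕ → E)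
    (hrec : ∀ k, 2 ≤ k →
      ‖v k‖ ≤ C * ∑ i ∈ Finset.Ico 1 k, ‖v i‖ * ‖v (k - i)‖)
    (h1 : ‖v 1‖ ≤ 2 / (9 * C)) :
    Summable (fun k : ℕ => ‖v (k + 1)‖) ∧
      ∃ s : E, HasSum (fun k : ℕ => v (k + 1)) s ∧
        (1 / 2) * ‖v 1‖ ≤ ‖s‖ ∧ ‖s‖ ≤ (3 / 2) * ‖v 1‖ :=
  stmt_5_general C hC v hrec h1
end
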